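/- Let f : ℝ² → ℝ² be a C¹ vector field with ∫_{|x|>r₀} |∇f|² dx < ∞ for some r₀ > 0. Writing f in polar coordinates f(r,θ), one has lim_{r→∞} (1/ln r) ∫₀^{2π} |f(r,θ)|² dθ = 0. -/

import Mathlib

/-!
Along a ray, `f(r e) - f(ρ e) = ∫_ρ^r ∂ₛ f(s e) ds`, and Cauchy–Schwarz with the weights `√s` and
`1/√s` gives `|f(r e)|² ≤ 2 |f(ρ e)|² + 2 log(r/ρ) ∫_ρ^r s |∇f(s e)|² ds`; the logarithm is
`∫_ρ^r ds/s`. Integrating over the angle turns the last integral into the Dirichlet integral over an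
annulus, which lies in `{‖x‖ > ρ/2}` (the norm on `ℝ × ℝ` is the sup norm). So the circle average
at radius `r`, divided by `log r`, is at most `o(1) + 2 D(ρ/2)` as `r → ∞`, where `D(t)` is the
Dirichlet integral over `{‖x‖ > t}`, and `D(t) → 0` as `t → ∞`.
-/

open MeasureTheory Real Filter Set Topology

theorem sq_intervalIntegral_mul_le {a b : ℝ} (hab : a ≤ b) {u v : ℝ → ℝ}
    (hu : ContinuousOn u (Icc a b)) (hv : ContinuousOn v (Icc a b)) :
    (∫ x in a..b, u x * v x) ^ 2 ≤ (∫ x in a..b, u x ^ 2) * ∫ x in a..b, v x ^ 2 := by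
  rw [← uIcc_of_le hab] at hu hv
  have hu2 : IntervalIntegrable (fun x => u x ^ 2) volume a b := (hu.pow 2).intervalIntegrable
  have hv2 : IntervalIntegrable (fun x => v x ^ 2) volume a b := (hv.pow 2).intervalIntegrable
  have huv : IntervalIntegrable (fun x => u x * v x) volume a b := (hu.mul hv).intervalIntegrable
  have hquad : ∀ t : ℝ, 0 ≤ (∫ x in a..b, v x ^ 2) * (t * t) +
      (-2 * ∫ x in a..b, u x * v x) * t + ∫ x in a..b, u x ^ 2 := by
    intro t
    have hexpand : ∫ x in a..b, (t * v x - u x) ^ 2 = (∫ x in a..b, v x ^ 2) * (t * t) +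
        (-2 * ∫ x in a..b, u x * v x) * t + ∫ x in a..b, u x ^ 2 := by
      simp_rw [show ∀ x, (t * v x - u x) ^ 2 =
        t * t * v x ^ 2 + -2 * t * (u x * v x) + u x ^ 2 from fun x => by ring]
      rw [intervalIntegral.integral_add ((hv2.const_mul _).add (huv.const_mul _)) hu2,
        intervalIntegral.integral_add (hv2.const_mul _) (huv.const_mul _),
        intervalIntegral.integral_const_mul, intervalIntegral.integral_const_mul]
      ring
    rw [← hexpand]
    exact intervalIntegral.integral_nonneg hab fun x _ => sq_nonneg _
  have hdiscrim := discrim_le_zero hquad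
  rw [discrim] at hdiscrim
  linarith

theorem norm_sub_sq_le_log_mul_integral {E : Type*} [NormedAddCommGroup E] [NormedSpace ℝ E]
    [CompleteSpace E] {g g' : ℝ → E} {ρ r : ℝ} (hρ : 0 < ρ) (hρr : ρ ≤ r)
    (hg : ∀ s ∈ Icc ρ r, HasDerivAt g (g' s) s) (hg' : ContinuousOn g' (Icc ρ r)) :
    ‖g r - g ρ‖ ^ 2 ≤ log (r / ρ) * ∫ s in ρ..r, s * ‖g' s‖ ^ 2 := by
  have hpos : ∀ s ∈ uIcc ρ r, 0 < s := fun s hs => hρ.trans_le (uIcc_of_le hρr ▸ hs).1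
  have hsqrt : ContinuousOn (fun s => √s) (Icc ρ r) := continuous_sqrt.continuousOn
  have hftc : ‖g r - g ρ‖ ≤ ∫ s in ρ..r, ‖g' s‖ := by
    rw [← intervalIntegral.integral_eq_sub_of_hasDerivAt (uIcc_of_le hρr ▸ hg)
      ((uIcc_of_le hρr ▸ hg').intervalIntegrable)]
    exact intervalIntegral.norm_integral_le_integral_norm hρr
  have hsplit : ∫ s in ρ..r, ‖g' s‖ = ∫ s in ρ..r, (√s * ‖g' s‖) * (√s)⁻¹ :=
    intervalIntegral.integral_congr fun s hs => by field_simp [(sqrt_pos.2 (hpos s hs)).ne']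
  have hweight : ∫ s in ρ..r, (√s * ‖g' s‖) ^ 2 = ∫ s in ρ..r, s * ‖g' s‖ ^ 2 :=
    intervalIntegral.integral_congr fun s hs => by rw [mul_pow, sq_sqrt (hpos s hs).le]
  have hlog : ∫ s in ρ..r, ((√s)⁻¹) ^ 2 = log (r / ρ) := by
    rw [← integral_inv_of_pos hρ (hρ.trans_le hρr)]
    exact intervalIntegral.integral_congr fun s hs => by rw [inv_pow, sq_sqrt (hpos s hs).le]
  calc ‖g r - g ρ‖ ^ 2 ≤ (∫ s in ρ..r, ‖g' s‖) ^ 2 := pow_le_pow_left₀ (norm_nonneg _) hftc 2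
    _ ≤ (∫ s in ρ..r, s * ‖g' s‖ ^ 2) * log (r / ρ) := by
      rw [hsplit, ← hweight, ← hlog]
      exact sq_intervalIntegral_mul_le hρr (hsqrt.mul hg'.norm)
        (hsqrt.inv₀ fun s hs => (sqrt_pos.2 (hρ.trans_le hs.1)).ne')
    _ = _ := mul_comm _ _

theorem norm_sq_apply_smul_le {V F : Type*} [NormedAddCommGroup V] [NormedSpace ℝ V]
    [NormedAddCommGroup F] [NormedSpace ℝ F] [CompleteSpace F] {f : V → F}
    (hf : ContDiff ℝ 1 f) {v : V} (hv : ‖v‖ ≤ 1) {ρ r : ℝ} (hρ : 0 < ρ) (hρr : ρ ≤ r) :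
    ‖f (r • v)‖ ^ 2 ≤
      2 * ‖f (ρ • v)‖ ^ 2 + 2 * log (r / ρ) * ∫ s in ρ..r, s * ‖fderiv ℝ f (s • v)‖ ^ 2 := by
  have hray : ∀ s : ℝ, HasDerivAt (fun s : ℝ => f (s • v)) (fderiv ℝ f (s • v) v) s :=
    fun s => by
      simpa [Function.comp_def] using
        (hf.differentiable one_ne_zero (s • v)).hasFDerivAt.comp_hasDerivAt s
          ((hasDerivAt_id s).smul_const v)
  have hDf : Continuous fun s : ℝ => fderiv ℝ f (s • v) :=
    (hf.continuous_fderiv one_ne_zero).comp (continuous_id.smul continuous_const)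
  have hdiff := norm_sub_sq_le_log_mul_integral hρ hρr (fun s _ => hray s)
    (hDf.clm_apply continuous_const).continuousOn
  have hdir : ∫ s in ρ..r, s * ‖fderiv ℝ f (s • v) v‖ ^ 2 ≤
      ∫ s in ρ..r, s * ‖fderiv ℝ f (s • v)‖ ^ 2 := by
    refine intervalIntegral.integral_mono_on hρr
      (Continuous.intervalIntegrable (by fun_prop) _ _)
      (Continuous.intervalIntegrable (by fun_prop) _ _) fun s hs => ?_
    have hs : 0 ≤ s := hρ.le.trans hs.1
    have hopNorm : ‖fderiv ℝ f (s • v) v‖ ≤ ‖fderiv ℝ f (s • v)‖ :=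
      ((fderiv ℝ f (s • v)).le_opNorm v).trans (mul_le_of_le_one_right (norm_nonneg _) hv)
    gcongr
  have htri := norm_le_insert' (f (r • v)) (f (ρ • v))
  calc ‖f (r • v)‖ ^ 2 ≤ 2 * ‖f (ρ • v)‖ ^ 2 + 2 * ‖f (r • v) - f (ρ • v)‖ ^ 2 := by
        nlinarith [norm_nonneg (f (r • v)), sq_nonneg (‖f (ρ • v)‖ - ‖f (r • v) - f (ρ • v)‖)]
    _ ≤ 2 * ‖f (ρ • v)‖ ^ 2 +
          2 * (log (r / ρ) * ∫ s in ρ..r, s * ‖fderiv ℝ f (s • v)‖ ^ 2) := by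
        gcongr
        exact hdiff.trans (by gcongr; exact log_nonneg ((one_le_div hρ).2 hρr))
    _ = _ := by ring

def annulus (ρ r : ℝ) : Set (ℝ × ℝ) :=
  {x | ρ ^ 2 < x.1 ^ 2 + x.2 ^ 2 ∧ x.1 ^ 2 + x.2 ^ 2 < r ^ 2}

theorem measurableSet_annulus (ρ r : ℝ) : MeasurableSet (annulus ρ r) := by
  unfold annulus
  measurability

theorem annulus_subset_setOf_lt_norm {ρ : ℝ} (hρ : 0 ≤ ρ) (r : ℝ) :
    annulus ρ r ⊆ {x | ρ / 2 < ‖x‖} := by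
  rintro x ⟨hx, -⟩
  have h1 : |x.1| ≤ ‖x‖ := norm_fst_le x
  have h2 : |x.2| ≤ ‖x‖ := norm_snd_le x
  show ρ / 2 < ‖x‖
  nlinarith [sq_abs x.1, sq_abs x.2, abs_nonneg x.1, abs_nonneg x.2]

theorem polarCoord_symm_mem_annulus_iff {ρ r : ℝ} (hρ : 0 ≤ ρ) (hr : 0 ≤ r) {p : ℝ × ℝ}
    (hp : p ∈ polarCoord.target) :
    polarCoord.symm p ∈ annulus ρ r ↔ p ∈ Ioo ρ r ×ˢ Ioo (-π) π := by
  obtain ⟨hp1 : 0 < p.1, hp2⟩ := hp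
  have hnorm : (p.1 * cos p.2) ^ 2 + (p.1 * sin p.2) ^ 2 = p.1 ^ 2 := by
    linear_combination p.1 ^ 2 * sin_sq_add_cos_sq p.2
  simp only [annulus, polarCoord_symm_apply, mem_ofPred_eq, hnorm, mem_prod, mem_Ioo, hp2,
    and_true]
  constructor
  · rintro ⟨h1, h2⟩
    exact ⟨by nlinarith, by nlinarith⟩
  · rintro ⟨h1, h2⟩
    exact ⟨by nlinarith, by nlinarith⟩

section PolarIntegral

variable {E : Type*} [NormedAddCommGroup E] [NormedSpace ℝ E]

theorem setIntegral_annulus_eq_setIntegral_polarCoord {ρ r : ℝ} (hρ : 0 ≤ ρ) (hr : 0 ≤ r)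
    (K : ℝ × ℝ → E) :
    ∫ x in annulus ρ r, K x = ∫ p in Ioo ρ r ×ˢ Ioo (-π) π, p.1 • K (polarCoord.symm p) := by
  set S := Ioo ρ r ×ˢ Ioo (-π) π
  have hS : S ⊆ polarCoord.target := prod_mono (fun s hs => hρ.trans_lt hs.1) subset_rfl
  calc ∫ x in annulus ρ r, K x
      = ∫ p in polarCoord.target, p.1 • (annulus ρ r).indicator K (polarCoord.symm p) := by
        rw [integral_comp_polarCoord_symm, integral_indicator (measurableSet_annulus ρ r)]
    _ = ∫ p in polarCoord.target, S.indicator (fun p => p.1 • K (polarCoord.symm p)) p := by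
        refine setIntegral_congr_fun polarCoord.open_target.measurableSet fun p hp => ?_
        by_cases h : p ∈ S
        · rw [indicator_of_mem ((polarCoord_symm_mem_annulus_iff hρ hr hp).2 h),
            indicator_of_mem h]
        · rw [indicator_of_notMem (mt (polarCoord_symm_mem_annulus_iff hρ hr hp).1 h),
            indicator_of_notMem h, smul_zero]
    _ = ∫ p in S, p.1 • K (polarCoord.symm p) := by
        rw [setIntegral_indicator (measurableSet_Ioo.prod measurableSet_Ioo),
          inter_eq_right.2 hS]

theorem setIntegral_Ioo_prod_Ioo_eq_intervalIntegral {g : ℝ × ℝ → E} (hg : Continuous g)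
    {a b c d : ℝ} (hab : a ≤ b) (hcd : c ≤ d) :
    ∫ p in Ioo a b ×ˢ Ioo c d, g p = ∫ y in c..d, ∫ x in a..b, g (x, y) := by
  have hint : IntegrableOn (fun q : ℝ × ℝ => g q.swap) (Ioo c d ×ˢ Ioo a b) :=
    (hg.comp continuous_swap).continuousOn.integrableOn_compact
      (isCompact_Icc.prod isCompact_Icc) |>.mono_set
        (prod_mono Ioo_subset_Icc_self Ioo_subset_Icc_self)
  rw [Measure.volume_eq_prod, ← setIntegral_prod_swap, setIntegral_prod _ hint,
    intervalIntegral.integral_of_le hcd, integral_Ioc_eq_integral_Ioo]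
  refine setIntegral_congr_fun measurableSet_Ioo fun y _ => ?_
  rw [intervalIntegral.integral_of_le hab, integral_Ioc_eq_integral_Ioo]
  rfl

theorem intervalIntegral_polar_eq_setIntegral_annulus {K : ℝ × ℝ → E} (hK : Continuous K)
    {ρ r : ℝ} (hρ : 0 ≤ ρ) (hρr : ρ ≤ r) :
    ∫ θ in 0..2 * π, ∫ s in ρ..r, s • K (s * cos θ, s * sin θ) = ∫ x in annulus ρ r, K x := by
  have hper : Function.Periodic (fun θ => ∫ s in ρ..r, s • K (s * cos θ, s * sin θ)) (2 * π) :=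
    fun θ => by simp only [cos_add_two_pi, sin_add_two_pi]
  rw [setIntegral_annulus_eq_setIntegral_polarCoord hρ (hρ.trans hρr),
    setIntegral_Ioo_prod_Ioo_eq_intervalIntegral (by fun_prop) hρr (by linarith [pi_pos]),
    ← zero_add (2 * π), hper.intervalIntegral_add_eq 0 (-π), show -π + 2 * π = π by ring]
  rfl

end PolarIntegral

theorem tendsto_setIntegral_setOf_lt_norm_atTop {V G : Type*} [NormedAddCommGroup V]
    [MeasurableSpace V] [OpensMeasurableSpace V] [NormedAddCommGroup G] [NormedSpace ℝ G]
    {μ : Measure V} {g : V → G} {r₀ : ℝ} (hg : IntegrableOn g {x | r₀ < ‖x‖} μ) :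
    Tendsto (fun t => ∫ x in {x | t < ‖x‖}, g x ∂μ) atTop (𝓝 0) := by
  have hempty : ⋂ t : ℝ, {x : V | t < ‖x‖} = ∅ :=
    eq_empty_of_forall_notMem fun x hx => lt_irrefl ‖x‖ (mem_iInter.1 hx ‖x‖)
  simpa [hempty] using tendsto_setIntegral_of_antitone (s := fun t : ℝ => {x : V | t < ‖x‖})
    (fun t => measurableSet_lt measurable_const measurable_norm)
    (fun s t hst x hx => hst.trans_lt hx) ⟨r₀, hg⟩

theorem tendsto_nhds_zero_of_eventually_le_add {α β : Type*} {l : Filter α} {l' : Filter β}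
    [l'.NeBot] {u : α → ℝ} {a : β → α → ℝ} {b : β → ℝ} (hu : ∀ᶠ x in l, 0 ≤ u x)
    (ha : ∀ y, Tendsto (a y) l (𝓝 0)) (hb : Tendsto b l' (𝓝 0))
    (hle : ∀ᶠ y in l', ∀ᶠ x in l, u x ≤ a y x + b y) : Tendsto u l (𝓝 0) := by
  refine tendsto_order.2 ⟨fun ε hε => hu.mono fun x hx => hε.trans_le hx, fun ε hε => ?_⟩
  obtain ⟨y, hby, hy⟩ := ((hb.eventually (gt_mem_nhds (half_pos hε))).and hle).exists
  filter_upwards [(ha y).eventually (gt_mem_nhds (half_pos hε)), hy] with x hax hx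
  linarith

section CircleAverage

variable {E : Type*} [NormedAddCommGroup E]

noncomputable def angularL2Sq (f : ℝ × ℝ → E) (r : ℝ) : ℝ :=
  ∫ θ in 0..2 * π, ‖f (r * cos θ, r * sin θ)‖ ^ 2

theorem angularL2Sq_nonneg (f : ℝ × ℝ → E) (r : ℝ) : 0 ≤ angularL2Sq f r :=
  intervalIntegral.integral_nonneg (by positivity) fun _ _ => sq_nonneg _

variable [NormedSpace ℝ E] [CompleteSpace E]

theorem angularL2Sq_le {f : ℝ × ℝ → E} (hf : ContDiff ℝ 1 f) {ρ r : ℝ} (hρ : 0 < ρ)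
    (hρr : ρ ≤ r) (hD : IntegrableOn (fun x => ‖fderiv ℝ f x‖ ^ 2) {x | ρ / 2 < ‖x‖}) :
    angularL2Sq f r ≤ 2 * angularL2Sq f ρ +
      2 * log (r / ρ) * ∫ x in {x | ρ / 2 < ‖x‖}, ‖fderiv ℝ f x‖ ^ 2 := by
  set K : ℝ × ℝ → ℝ := fun x => ‖fderiv ℝ f x‖ ^ 2
  have hK : Continuous K := (hf.continuous_fderiv one_ne_zero).norm.pow 2
  have hcirc : ∀ t : ℝ, Continuous fun θ => ‖f (t * cos θ, t * sin θ)‖ ^ 2 := fun t =>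
    (hf.continuous.comp (by fun_prop)).norm.pow 2
  have hradial : Continuous fun θ => ∫ s in ρ..r, s * K (s * cos θ, s * sin θ) :=
    intervalIntegral.continuous_parametric_intervalIntegral_of_continuous'
      (continuous_snd.mul (hK.comp (by fun_prop))) ρ r
  have hdir : ∀ θ : ℝ, ‖((cos θ, sin θ) : ℝ × ℝ)‖ ≤ 1 := fun θ =>
    max_le (abs_cos_le_one θ) (abs_sin_le_one θ)
  have hpolar : ∫ θ in 0..2 * π, ∫ s in ρ..r, s * K (s * cos θ, s * sin θ) ≤
      ∫ x in {x | ρ / 2 < ‖x‖}, K x := by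
    change ∫ θ in 0..2 * π, ∫ s in ρ..r, s • K (s * cos θ, s * sin θ) ≤ _
    rw [intervalIntegral_polar_eq_setIntegral_annulus hK hρ.le hρr]
    exact setIntegral_mono_set hD (ae_of_all _ fun x => sq_nonneg _)
      (annulus_subset_setOf_lt_norm hρ.le r).eventuallyLE
  calc angularL2Sq f r
      ≤ ∫ θ in 0..2 * π, (2 * ‖f (ρ * cos θ, ρ * sin θ)‖ ^ 2 +
          2 * log (r / ρ) * ∫ s in ρ..r, s * K (s * cos θ, s * sin θ)) :=
        intervalIntegral.integral_mono_on (by positivity) ((hcirc r).intervalIntegrable _ _)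
          (Continuous.intervalIntegrable (by fun_prop) _ _) fun θ _ =>
          norm_sq_apply_smul_le hf (hdir θ) hρ hρr
    _ = 2 * angularL2Sq f ρ +
          2 * log (r / ρ) * ∫ θ in 0..2 * π, ∫ s in ρ..r, s * K (s * cos θ, s * sin θ) := by
        rw [intervalIntegral.integral_add (((hcirc ρ).intervalIntegrable _ _).const_mul _)
          ((hradial.intervalIntegrable _ _).const_mul _), intervalIntegral.integral_const_mul,
          intervalIntegral.integral_const_mul, angularL2Sq]
    _ ≤ _ := by
        gcongr
        exact mul_nonneg zero_le_two (log_nonneg ((one_le_div hρ).2 hρr))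

theorem inv_log_mul_angularL2Sq_le {f : ℝ × ℝ → E} (hf : ContDiff ℝ 1 f) {ρ r : ℝ}
    (hρ : 1 ≤ ρ) (hρr : ρ ≤ r)
    (hD : IntegrableOn (fun x => ‖fderiv ℝ f x‖ ^ 2) {x | ρ / 2 < ‖x‖}) :
    (log r)⁻¹ * angularL2Sq f r ≤
      (log r)⁻¹ * (2 * angularL2Sq f ρ) + 2 * ∫ x in {x | ρ / 2 < ‖x‖}, ‖fderiv ℝ f x‖ ^ 2 := by
  set D := ∫ x in {x | ρ / 2 < ‖x‖}, ‖fderiv ℝ f x‖ ^ 2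
  have hρ0 : 0 < ρ := one_pos.trans_le hρ
  have hD0 : 0 ≤ D :=
    setIntegral_nonneg (measurableSet_lt measurable_const measurable_norm) fun _ _ => sq_nonneg _
  have hratio : log (r / ρ) ≤ log r :=
    log_le_log (div_pos (hρ0.trans_le hρr) hρ0) (div_le_self (hρ0.trans_le hρr).le hρ)
  rcases hρr.lt_or_eq with hr | rfl
  · have hlog : 0 < log r := log_pos (hρ.trans_lt hr)
    calc (log r)⁻¹ * angularL2Sq f r
        ≤ (log r)⁻¹ * (2 * angularL2Sq f ρ + 2 * log (r / ρ) * D) := by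
          gcongr
          exact angularL2Sq_le hf hρ0 hρr hD
      _ ≤ (log r)⁻¹ * (2 * angularL2Sq f ρ + 2 * log r * D) := by gcongr
      _ = (log r)⁻¹ * (2 * angularL2Sq f ρ) + 2 * D := by field_simp
  · nlinarith [angularL2Sq_nonneg f ρ, inv_nonneg.2 (log_nonneg hρ)]

end CircleAverage

theorem gilbarg_weinberger_average_decay_general (f : ℝ × ℝ → ℝ × ℝ) (hf : ContDiff ℝ 1 f)
    (r0 : ℝ)
    (hD : IntegrableOn (fun x => ‖fderiv ℝ f x‖ ^ 2) {x : ℝ × ℝ | r0 < ‖x‖}) :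
    Tendsto (fun r : ℝ =>
        (Real.log r)⁻¹ * ∫ θ in (0:ℝ)..(2 * π), ‖f (r * Real.cos θ, r * Real.sin θ)‖ ^ 2)
      atTop (nhds 0) := by
  have htail : Tendsto (fun ρ : ℝ => 2 * ∫ x in {x | ρ / 2 < ‖x‖}, ‖fderiv ℝ f x‖ ^ 2)
      atTop (𝓝 0) := by
    simpa using ((tendsto_setIntegral_setOf_lt_norm_atTop hD).comp
      (tendsto_id.atTop_div_const two_pos)).const_mul 2
  have hlog : ∀ c : ℝ, Tendsto (fun r => (log r)⁻¹ * c) atTop (𝓝 0) := fun c => by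
    simpa using (tendsto_inv_atTop_zero.comp tendsto_log_atTop).mul_const c
  refine tendsto_nhds_zero_of_eventually_le_add
    ((eventually_ge_atTop 1).mono fun r hr =>
      mul_nonneg (inv_nonneg.2 (log_nonneg hr)) (angularL2Sq_nonneg f r))
    (fun ρ => hlog (2 * angularL2Sq f ρ)) htail ?_
  filter_upwards [eventually_ge_atTop (max (2 * r0) 1)] with ρ hρ
  filter_upwards [eventually_ge_atTop ρ] with r hρr
  refine inv_log_mul_angularL2Sq_le hf (le_of_max_le_right hρ) hρr (hD.mono_set fun x hx => ?_)
  exact lt_of_le_of_lt (by linarith [le_of_max_le_left hρ]) (show ρ / 2 < ‖x‖ from hx)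

/-- Gilbarg–Weinberger decay: finite Dirichlet integral on an exterior planar domain forces
the angular `L²` average of `f` on circles of radius `r` to be `o(ln r)`. -/
theorem gilbarg_weinberger_average_decay (f : ℝ × ℝ → ℝ × ℝ) (hf : ContDiff ℝ 1 f)
    (r0 : ℝ) (hr0 : 0 < r0)
    (hD : IntegrableOn (fun x => ‖fderiv ℝ f x‖ ^ 2) {x : ℝ × ℝ | r0 < ‖x‖}) :
    Tendsto (fun r : ℝ =>
        (Real.log r)⁻¹ * ∫ θ in (0:ℝ)..(2 * π), ‖f (r * Real.cos θ, r * Real.sin θ)‖ ^ 2)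
      atTop (nhds 0) :=
  gilbarg_weinberger_average_decay_general f hf r0 hD
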